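/- At every point of U, div(κ₂v₁·e₁ + κ₁v₂·e₂) − ε̄₁·κ₂ − ε̄₂·κ₁ = 2·𝓚·v_n, where 𝓚 = κ₁κ₂ is the Gaussian curvature. -/

import Mathlib

noncomputable section

/-- Vectors in ℝ³. -/
abbrev V3 : Type := Fin 3 → ℝ

/-- Euclidean dot product on ℝ³. -/
def dot3 (a b : V3) : ℝ := a 0 * b 0 + a 1 * b 1 + a 2 * b 2

/-- Cross product on ℝ³. -/
def cross3 (a b : V3) : V3 :=
  ![a 1 * b 2 - a 2 * b 1, a 2 * b 0 - a 0 * b 2, a 0 * b 1 - a 1 * b 0]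

/-- Euclidean norm on ℝ³. -/
def norm3 (a : V3) : ℝ := Real.sqrt (dot3 a a)

/-- Partial derivative in the first (α) direction. -/
def pd1 {E : Type*} [NormedAddCommGroup E] [NormedSpace ℝ E]
    (f : ℝ × ℝ → E) (x : ℝ × ℝ) : E := fderiv ℝ f x (1, 0)

/-- Partial derivative in the second (β) direction. -/
def pd2 {E : Type*} [NormedAddCommGroup E] [NormedSpace ℝ E]
    (f : ℝ × ℝ → E) (x : ℝ × ℝ) : E := fderiv ℝ f x (0, 1)

def A₁ (r : ℝ × ℝ → V3) (x : ℝ × ℝ) : ℝ := norm3 (pd1 r x)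
def A₂ (r : ℝ × ℝ → V3) (x : ℝ × ℝ) : ℝ := norm3 (pd2 r x)
def e₁ (r : ℝ × ℝ → V3) (x : ℝ × ℝ) : V3 := (A₁ r x)⁻¹ • pd1 r x
def e₂ (r : ℝ × ℝ → V3) (x : ℝ × ℝ) : V3 := (A₂ r x)⁻¹ • pd2 r x
/-- Unit normal N = e₁ × e₂. -/
def NN (r : ℝ × ℝ → V3) (x : ℝ × ℝ) : V3 := cross3 (e₁ r x) (e₂ r x)
/-- p = (A₁)_β / A₂. -/
def pp (r : ℝ × ℝ → V3) (x : ℝ × ℝ) : ℝ := pd2 (A₁ r) x / A₂ r x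
/-- q = (A₂)_α / A₁. -/
def qq (r : ℝ × ℝ → V3) (x : ℝ × ℝ) : ℝ := pd1 (A₂ r) x / A₁ r x
/-- H∘ = −κ₁ A₁. -/
def Ho (r : ℝ × ℝ → V3) (κ₁ : ℝ × ℝ → ℝ) (x : ℝ × ℝ) : ℝ := -κ₁ x * A₁ r x
/-- K∘ = −κ₂ A₂. -/
def Ko (r : ℝ × ℝ → V3) (κ₂ : ℝ × ℝ → ℝ) (x : ℝ × ℝ) : ℝ := -κ₂ x * A₂ r x

/-- Surface divergence of the tangential field f₁·e₁ + f₂·e₂. -/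
def sdiv (r : ℝ × ℝ → V3) (f₁ f₂ : ℝ × ℝ → ℝ) (x : ℝ × ℝ) : ℝ :=
  (pd1 (fun y => f₁ y * A₂ r y) x + pd2 (fun y => f₂ y * A₁ r y) x) / (A₁ r x * A₂ r x)

/-- Surface gradient ∇f = (f_α/A₁)·e₁ + (f_β/A₂)·e₂. -/
def sgrad (r : ℝ × ℝ → V3) (f : ℝ × ℝ → ℝ) (x : ℝ × ℝ) : V3 :=
  (pd1 f x / A₁ r x) • e₁ r x + (pd2 f x / A₂ r x) • e₂ r x


/-- Variation vector field V = v₁·e₁ + v₂·e₂ + v_n·N. -/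
def Vfield (r : ℝ × ℝ → V3) (v₁ v₂ v_n : ℝ × ℝ → ℝ) (y : ℝ × ℝ) : V3 :=
  v₁ y • e₁ r y + v₂ y • e₂ r y + v_n y • NN r y

/-- The deformed surface R(t) = r + t·V. -/
def Rt (r Vf : ℝ × ℝ → V3) (t : ℝ) (y : ℝ × ℝ) : V3 := r y + t • Vf y

/-- Infinitesimal strain ε̄₁ = ((v₁)_α + p v₂ + H∘ v_n)/A₁. -/
def eps1 (r : ℝ × ℝ → V3) (κ₁ : ℝ × ℝ → ℝ) (v₁ v₂ v_n : ℝ × ℝ → ℝ) (x : ℝ × ℝ) : ℝ :=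
  (pd1 v₁ x + pp r x * v₂ x + Ho r κ₁ x * v_n x) / A₁ r x

/-- Infinitesimal strain ε̄₂ = ((v₂)_β + q v₁ + K∘ v_n)/A₂. -/
def eps2 (r : ℝ × ℝ → V3) (κ₂ : ℝ × ℝ → ℝ) (v₁ v₂ v_n : ℝ × ℝ → ℝ) (x : ℝ × ℝ) : ℝ :=
  (pd2 v₂ x + qq r x * v₁ x + Ko r κ₂ x * v_n x) / A₂ r x

/-- Infinitesimal rotation ϑ̄ = (−(v_n)_α + H∘ v₁)/A₁. -/
def thb (r : ℝ × ℝ → V3) (κ₁ : ℝ × ℝ → ℝ) (v₁ v_n : ℝ × ℝ → ℝ) (x : ℝ × ℝ) : ℝ :=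
  (-(pd1 v_n x) + Ho r κ₁ x * v₁ x) / A₁ r x

/-- Infinitesimal rotation ψ̄ = (−(v_n)_β + K∘ v₂)/A₂. -/
def psb (r : ℝ × ℝ → V3) (κ₂ : ℝ × ℝ → ℝ) (v₂ v_n : ℝ × ℝ → ℝ) (x : ℝ × ℝ) : ℝ :=
  (-(pd2 v_n x) + Ko r κ₂ x * v₂ x) / A₂ r x

/-- Shear ω₁ = (v_α − p u)/A₁. -/
def om1 (r : ℝ × ℝ → V3) (u v : ℝ × ℝ → ℝ) (x : ℝ × ℝ) : ℝ :=
  (pd1 v x - pp r x * u x) / A₁ r x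

/-- Shear ω₂ = (u_β − q v)/A₂. -/
def om2 (r : ℝ × ℝ → V3) (u v : ℝ × ℝ → ℝ) (x : ℝ × ℝ) : ℝ :=
  (pd2 u x - qq r x * v x) / A₂ r x

/-- First fundamental form coefficient E. -/
def EE (R : ℝ × ℝ → V3) (x : ℝ × ℝ) : ℝ := dot3 (pd1 R x) (pd1 R x)
/-- First fundamental form coefficient F. -/
def FF (R : ℝ × ℝ → V3) (x : ℝ × ℝ) : ℝ := dot3 (pd1 R x) (pd2 R x)
/-- First fundamental form coefficient G. -/
def GG (R : ℝ × ℝ → V3) (x : ℝ × ℝ) : ℝ := dot3 (pd2 R x) (pd2 R x)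
/-- Unit normal of a parametrized surface. -/
def unitN (R : ℝ × ℝ → V3) (x : ℝ × ℝ) : V3 :=
  (norm3 (cross3 (pd1 R x) (pd2 R x)))⁻¹ • cross3 (pd1 R x) (pd2 R x)
/-- Second fundamental form coefficient e = N·R_αα. -/
def ee (R : ℝ × ℝ → V3) (x : ℝ × ℝ) : ℝ := dot3 (unitN R x) (pd1 (pd1 R) x)
/-- Second fundamental form coefficient f = N·R_αβ. -/
def ff (R : ℝ × ℝ → V3) (x : ℝ × ℝ) : ℝ := dot3 (unitN R x) (pd2 (pd1 R) x)
/-- Second fundamental form coefficient g = N·R_ββ. -/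
def gg (R : ℝ × ℝ → V3) (x : ℝ × ℝ) : ℝ := dot3 (unitN R x) (pd2 (pd2 R) x)
/-- Mean curvature H = (eG − 2fF + gE)/(2(EG − F²)). -/
def meanH (R : ℝ × ℝ → V3) (x : ℝ × ℝ) : ℝ :=
  (ee R x * GG R x - 2 * ff R x * FF R x + gg R x * EE R x) /
    (2 * (EE R x * GG R x - FF R x ^ 2))
/-- κ̃₁ = −(N_α·R_α)/‖R_α‖². -/
def princ1 (R : ℝ × ℝ → V3) (x : ℝ × ℝ) : ℝ :=
  -(dot3 (pd1 (unitN R) x) (pd1 R x)) / (norm3 (pd1 R x)) ^ 2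
/-- κ̃₂ = −(N_β·R_β)/‖R_β‖². -/
def princ2 (R : ℝ × ℝ → V3) (x : ℝ × ℝ) : ℝ :=
  -(dot3 (pd2 (unitN R) x) (pd2 R x)) / (norm3 (pd2 R x)) ^ 2

/-- Linear Weingarten functional integrand (a·H + b)·dA + (c/3)·R·(R_α × R_β). -/
def Phi (a b c : ℝ) (R : ℝ × ℝ → V3) (x : ℝ × ℝ) : ℝ :=
  (a * meanH R x + b) * norm3 (cross3 (pd1 R x) (pd2 R x)) +
    c / 3 * dot3 (R x) (cross3 (pd1 R x) (pd2 R x))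


/-! ### Auxiliary lemmas -/

section Helpers

lemma dot3_nonneg (u : V3) : 0 ≤ dot3 u u := by
  simp only [dot3]; nlinarith [sq_nonneg (u 0), sq_nonneg (u 1), sq_nonneg (u 2)]

lemma dot3_pos {u : V3} (hu : u ≠ 0) : 0 < dot3 u u := by
  rcases (dot3_nonneg u).lt_or_eq with h | h
  · exact h
  · exfalso; apply hu
    have h' : u 0 * u 0 + u 1 * u 1 + u 2 * u 2 = 0 := by
      simpa [dot3] using h.symm
    have h0 : u 0 = 0 := mul_self_eq_zero.mp (by
      nlinarith [mul_self_nonneg (u 0), mul_self_nonneg (u 1), mul_self_nonneg (u 2)])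
    have h1 : u 1 = 0 := mul_self_eq_zero.mp (by
      nlinarith [mul_self_nonneg (u 0), mul_self_nonneg (u 1), mul_self_nonneg (u 2)])
    have h2 : u 2 = 0 := mul_self_eq_zero.mp (by
      nlinarith [mul_self_nonneg (u 0), mul_self_nonneg (u 1), mul_self_nonneg (u 2)])
    funext i
    fin_cases i <;> assumption

lemma diffAt_apply3 {F : ℝ × ℝ → V3} {x : ℝ × ℝ} (hF : DifferentiableAt ℝ F x) (i : Fin 3) :
    DifferentiableAt ℝ (fun y => F y i) x :=
  (ContinuousLinearMap.proj (R := ℝ) (φ := fun _ : Fin 3 => ℝ) i).differentiableAt.comp x hF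

lemma fderiv_apply3 {F : ℝ × ℝ → V3} {x : ℝ × ℝ} (hF : DifferentiableAt ℝ F x) (i : Fin 3)
    (v : ℝ × ℝ) : fderiv ℝ (fun y => F y i) x v = fderiv ℝ F x v i := by
  have h : fderiv ℝ ((ContinuousLinearMap.proj (R := ℝ) (φ := fun _ : Fin 3 => ℝ) i) ∘ F) x
      = ((ContinuousLinearMap.proj (R := ℝ) (φ := fun _ : Fin 3 => ℝ) i).comp (fderiv ℝ F x)) := by
    rw [fderiv_comp x (ContinuousLinearMap.differentiableAt _) hF]
    simp
  have h2 := congrArg (fun L => L v) h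
  exact h2

lemma fderiv_add_apply' {f g : ℝ × ℝ → ℝ} {x : ℝ × ℝ} (hf : DifferentiableAt ℝ f x)
    (hg : DifferentiableAt ℝ g x) (v : ℝ × ℝ) :
    fderiv ℝ (fun y => f y + g y) x v = fderiv ℝ f x v + fderiv ℝ g x v := by
  rw [fderiv_fun_add hf hg]; rfl

lemma fderiv_mul_apply' {f g : ℝ × ℝ → ℝ} {x : ℝ × ℝ} (hf : DifferentiableAt ℝ f x)
    (hg : DifferentiableAt ℝ g x) (v : ℝ × ℝ) :
    fderiv ℝ (fun y => f y * g y) x v = fderiv ℝ f x v * g x + f x * fderiv ℝ g x v := by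
  rw [fderiv_fun_mul hf hg]
  simp [smul_eq_mul]
  ring

lemma diffAt_dot3 {F G : ℝ × ℝ → V3} {x : ℝ × ℝ} (hF : DifferentiableAt ℝ F x)
    (hG : DifferentiableAt ℝ G x) :
    DifferentiableAt ℝ (fun y => dot3 (F y) (G y)) x := by
  simp only [dot3]
  exact (((diffAt_apply3 hF 0).mul (diffAt_apply3 hG 0)).add
      ((diffAt_apply3 hF 1).mul (diffAt_apply3 hG 1))).add
    ((diffAt_apply3 hF 2).mul (diffAt_apply3 hG 2))

lemma fderiv_dot3 {F G : ℝ × ℝ → V3} {x : ℝ × ℝ} (hF : DifferentiableAt ℝ F x)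
    (hG : DifferentiableAt ℝ G x) (v : ℝ × ℝ) :
    fderiv ℝ (fun y => dot3 (F y) (G y)) x v
      = dot3 (fderiv ℝ F x v) (G x) + dot3 (F x) (fderiv ℝ G x v) := by
  have hFi : ∀ i, DifferentiableAt ℝ (fun y => F y i) x := diffAt_apply3 hF
  have hGi : ∀ i, DifferentiableAt ℝ (fun y => G y i) x := diffAt_apply3 hG
  have key : fderiv ℝ (fun y => F y 0 * G y 0 + F y 1 * G y 1 + F y 2 * G y 2) x v
      = dot3 (fderiv ℝ F x v) (G x) + dot3 (F x) (fderiv ℝ G x v) := by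
    rw [fderiv_add_apply' (((hFi 0).fun_mul (hGi 0)).fun_add ((hFi 1).fun_mul (hGi 1)))
        ((hFi 2).fun_mul (hGi 2)),
      fderiv_add_apply' ((hFi 0).fun_mul (hGi 0)) ((hFi 1).fun_mul (hGi 1)),
      fderiv_mul_apply' (hFi 0) (hGi 0), fderiv_mul_apply' (hFi 1) (hGi 1),
      fderiv_mul_apply' (hFi 2) (hGi 2),
      fderiv_apply3 hF 0, fderiv_apply3 hF 1, fderiv_apply3 hF 2,
      fderiv_apply3 hG 0, fderiv_apply3 hG 1, fderiv_apply3 hG 2]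
    simp only [dot3]
    ring
  exact key

lemma dot3_comm (u w : V3) : dot3 u w = dot3 w u := by simp only [dot3]; ring

lemma dot3_add_left (u v w : V3) : dot3 (u + v) w = dot3 u w + dot3 v w := by
  simp only [dot3, Pi.add_apply]; ring

lemma dot3_smul_left (c : ℝ) (u w : V3) : dot3 (c • u) w = c * dot3 u w := by
  simp only [dot3, Pi.smul_apply, smul_eq_mul]; ring

lemma fderiv_sqrt_comp {f : ℝ × ℝ → ℝ} {x : ℝ × ℝ} (hf : DifferentiableAt ℝ f x)
    (hpos : 0 < f x) (v : ℝ × ℝ) :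
    fderiv ℝ (fun y => Real.sqrt (f y)) x v = fderiv ℝ f x v / (2 * Real.sqrt (f x)) := by
  have h := (Real.hasDerivAt_sqrt hpos.ne').comp_hasFDerivAt x hf.hasFDerivAt
  have := h.fderiv
  have h2 := congrArg (fun L => L v) this
  simp only [ContinuousLinearMap.smul_apply, smul_eq_mul] at h2
  rw [show (fun y => Real.sqrt (f y)) = (Real.sqrt ∘ f) from rfl, h2]
  ring

lemma fderiv_smul_apply' {c : ℝ × ℝ → ℝ} {F : ℝ × ℝ → V3} {x : ℝ × ℝ}
    (hc : DifferentiableAt ℝ c x) (hF : DifferentiableAt ℝ F x) (v : ℝ × ℝ) :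
    fderiv ℝ (fun y => c y • F y) x v = fderiv ℝ c x v • F x + c x • fderiv ℝ F x v := by
  rw [fderiv_fun_smul hc hF]
  simp only [ContinuousLinearMap.add_apply, ContinuousLinearMap.smul_apply,
    ContinuousLinearMap.smulRight_apply]
  abel

lemma pd_pd_eq {E : Type*} [NormedAddCommGroup E] [NormedSpace ℝ E] {f : ℝ × ℝ → E} {x : ℝ × ℝ}
    (hf : ContDiffAt ℝ 2 f x) (v w : ℝ × ℝ) :
    fderiv ℝ (fun y => fderiv ℝ f y w) x v = fderiv ℝ (fderiv ℝ f) x v w := by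
  have hdf : DifferentiableAt ℝ (fderiv ℝ f) x :=
    (hf.fderiv_right (m := 1) (by norm_num)).differentiableAt one_ne_zero
  rw [fderiv_clm_apply hdf (differentiableAt_const w)]
  simp

lemma pd_symm {E : Type*} [NormedAddCommGroup E] [NormedSpace ℝ E] {f : ℝ × ℝ → E} {x : ℝ × ℝ}
    (hf : ContDiffAt ℝ 2 f x) : pd1 (pd2 f) x = pd2 (pd1 f) x := by
  have hs := hf.isSymmSndFDerivAt (by simp)
  show fderiv ℝ (fun y => fderiv ℝ f y (0, 1)) x (1, 0)
      = fderiv ℝ (fun y => fderiv ℝ f y (1, 0)) x (0, 1)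
  rw [pd_pd_eq hf, pd_pd_eq hf]
  exact hs _ _

lemma contDiffAt_cross3 {n : WithTop ℕ∞} {F G : ℝ × ℝ → V3} {x : ℝ × ℝ}
    (hF : ContDiffAt ℝ n F x) (hG : ContDiffAt ℝ n G x) :
    ContDiffAt ℝ n (fun y => cross3 (F y) (G y)) x := by
  have hFi : ∀ i, ContDiffAt ℝ n (fun y => F y i) x := contDiffAt_pi.mp hF
  have hGi : ∀ i, ContDiffAt ℝ n (fun y => G y i) x := contDiffAt_pi.mp hG
  apply contDiffAt_pi.mpr
  intro i
  fin_cases i <;>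
    simp only [cross3, Matrix.cons_val_zero, Matrix.cons_val_one, Matrix.head_cons,
      Matrix.cons_val_two, Matrix.tail_cons, Fin.isValue] <;>
    exact ((hFi _).mul (hGi _)).sub ((hFi _).mul (hGi _))


lemma contDiffAt_dot3 {n : WithTop ℕ∞} {F G : ℝ × ℝ → V3} {x : ℝ × ℝ}
    (hF : ContDiffAt ℝ n F x) (hG : ContDiffAt ℝ n G x) :
    ContDiffAt ℝ n (fun y => dot3 (F y) (G y)) x := by
  have hFi := contDiffAt_pi.mp hF
  have hGi := contDiffAt_pi.mp hG
  simp only [dot3]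
  exact (((hFi 0).mul (hGi 0)).add ((hFi 1).mul (hGi 1))).add ((hFi 2).mul (hGi 2))

end Helpers

theorem stmt_12
    (U : Set (ℝ × ℝ)) (hU : IsOpen U)
    (r : ℝ × ℝ → V3) (hr : ContDiffOn ℝ (⊤ : ℕ∞) r U)
    (hne1 : ∀ x ∈ U, pd1 r x ≠ 0) (hne2 : ∀ x ∈ U, pd2 r x ≠ 0)
    (horth : ∀ x ∈ U, dot3 (pd1 r x) (pd2 r x) = 0)
    (κ₁ κ₂ : ℝ × ℝ → ℝ) (hκ₁ : ContDiffOn ℝ (⊤ : ℕ∞) κ₁ U) (hκ₂ : ContDiffOn ℝ (⊤ : ℕ∞) κ₂ U)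
    (hN1 : ∀ x ∈ U, pd1 (NN r) x = (-κ₁ x) • pd1 r x)
    (hN2 : ∀ x ∈ U, pd2 (NN r) x = (-κ₂ x) • pd2 r x)
    (v₁ v₂ v_n : ℝ × ℝ → ℝ)
    (hv₁ : ContDiffOn ℝ (⊤ : ℕ∞) v₁ U) (hv₂ : ContDiffOn ℝ (⊤ : ℕ∞) v₂ U) (hvn : ContDiffOn ℝ (⊤ : ℕ∞) v_n U)
 :
    ∀ x ∈ U,
      sdiv r (fun y => κ₂ y * v₁ y) (fun y => κ₁ y * v₂ y) x -
          eps1 r κ₁ v₁ v₂ v_n x * κ₂ x - eps2 r κ₂ v₁ v₂ v_n x * κ₁ x =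
        2 * (κ₁ x * κ₂ x) * v_n x := by
  intro x hx
  have hmem : U ∈ nhds x := hU.mem_nhds hx
  -- pointwise smoothness
  have hrx : ContDiffAt ℝ 3 r x := (hr.contDiffAt hmem).of_le (WithTop.coe_le_coe.mpr le_top)
  have hr2x : ContDiffAt ℝ 2 r x := hrx.of_le (by norm_num)
  have hdκ₁ : DifferentiableAt ℝ κ₁ x :=
    ((hκ₁.contDiffAt hmem).of_le (by exact_mod_cast (le_top : (1 : ℕ∞) ≤ ⊤))).differentiableAt one_ne_zero
  have hdκ₂ : DifferentiableAt ℝ κ₂ x :=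
    ((hκ₂.contDiffAt hmem).of_le (by exact_mod_cast (le_top : (1 : ℕ∞) ≤ ⊤))).differentiableAt one_ne_zero
  have hdv₁ : DifferentiableAt ℝ v₁ x :=
    ((hv₁.contDiffAt hmem).of_le (by exact_mod_cast (le_top : (1 : ℕ∞) ≤ ⊤))).differentiableAt one_ne_zero
  have hdv₂ : DifferentiableAt ℝ v₂ x :=
    ((hv₂.contDiffAt hmem).of_le (by exact_mod_cast (le_top : (1 : ℕ∞) ≤ ⊤))).differentiableAt one_ne_zero
  -- smoothness of the partial derivatives of r
  have hfd : ContDiffAt ℝ 2 (fderiv ℝ r) x := hrx.fderiv_right (m := 2) (by norm_num)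
  have hpd1 : ContDiffAt ℝ 2 (pd1 r) x := hfd.clm_apply contDiffAt_const
  have hpd2 : ContDiffAt ℝ 2 (pd2 r) x := hfd.clm_apply contDiffAt_const
  have hd1 : DifferentiableAt ℝ (pd1 r) x := hpd1.differentiableAt two_ne_zero
  have hd2 : DifferentiableAt ℝ (pd2 r) x := hpd2.differentiableAt two_ne_zero
  -- positivity of the metric coefficients
  have hS1pos : 0 < dot3 (pd1 r x) (pd1 r x) := dot3_pos (hne1 x hx)
  have hS2pos : 0 < dot3 (pd2 r x) (pd2 r x) := dot3_pos (hne2 x hx)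
  have ha_pos : 0 < A₁ r x := Real.sqrt_pos.mpr hS1pos
  have hb_pos : 0 < A₂ r x := Real.sqrt_pos.mpr hS2pos
  have ha : A₁ r x ≠ 0 := ha_pos.ne'
  have hb : A₂ r x ≠ 0 := hb_pos.ne'
  have hsq1 : A₁ r x ^ 2 = dot3 (pd1 r x) (pd1 r x) := Real.sq_sqrt hS1pos.le
  have hsq2 : A₂ r x ^ 2 = dot3 (pd2 r x) (pd2 r x) := Real.sq_sqrt hS2pos.le
  -- smoothness of A₁, A₂
  have hS1 : ContDiffAt ℝ 2 (fun y => dot3 (pd1 r y) (pd1 r y)) x := contDiffAt_dot3 hpd1 hpd1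
  have hS2 : ContDiffAt ℝ 2 (fun y => dot3 (pd2 r y) (pd2 r y)) x := contDiffAt_dot3 hpd2 hpd2
  have hA1 : ContDiffAt ℝ 2 (A₁ r) x := by have := (Real.contDiffAt_sqrt hS1pos.ne').comp x hS1; exact this
  have hA2 : ContDiffAt ℝ 2 (A₂ r) x := by have := (Real.contDiffAt_sqrt hS2pos.ne').comp x hS2; exact this
  have hdA1 : DifferentiableAt ℝ (A₁ r) x := hA1.differentiableAt two_ne_zero
  have hdA2 : DifferentiableAt ℝ (A₂ r) x := hA2.differentiableAt two_ne_zero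
  -- smoothness of the unit normal
  have he1 : ContDiffAt ℝ 2 (e₁ r) x := (hA1.inv ha).smul hpd1
  have he2 : ContDiffAt ℝ 2 (e₂ r) x := (hA2.inv hb).smul hpd2
  have hNN : ContDiffAt ℝ 2 (NN r) x := contDiffAt_cross3 he1 he2
  -- symmetry of second derivatives of r
  have hsymr : fderiv ℝ (pd2 r) x ((1 : ℝ), (0 : ℝ)) = fderiv ℝ (pd1 r) x ((0 : ℝ), (1 : ℝ)) :=
    pd_symm hr2x
  -- the mixed-partial identity for N (Codazzi)
  have hev1 : pd1 (NN r) =ᶠ[nhds x] fun y => (-κ₁ y) • pd1 r y :=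
    Filter.eventuallyEq_of_mem hmem hN1
  have hev2 : pd2 (NN r) =ᶠ[nhds x] fun y => (-κ₂ y) • pd2 r y :=
    Filter.eventuallyEq_of_mem hmem hN2
  have hnegκ₁ : fderiv ℝ (fun y => -κ₁ y) x ((0 : ℝ), (1 : ℝ)) = -(fderiv ℝ κ₁ x (0, 1)) := by
    rw [fderiv_fun_neg]; simp
  have hnegκ₂ : fderiv ℝ (fun y => -κ₂ y) x ((1 : ℝ), (0 : ℝ)) = -(fderiv ℝ κ₂ x (1, 0)) := by
    rw [fderiv_fun_neg]; simp
  have hE : (-(fderiv ℝ κ₁ x (0, 1))) • pd1 r x + (-κ₁ x) • fderiv ℝ (pd1 r) x (0, 1)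
      = (-(fderiv ℝ κ₂ x (1, 0))) • pd2 r x + (-κ₂ x) • fderiv ℝ (pd1 r) x (0, 1) := by
    have h1 : fderiv ℝ (pd1 (NN r)) x ((0 : ℝ), (1 : ℝ))
        = (-(fderiv ℝ κ₁ x (0, 1))) • pd1 r x + (-κ₁ x) • fderiv ℝ (pd1 r) x (0, 1) := by
      rw [hev1.fderiv_eq, fderiv_smul_apply' hdκ₁.fun_neg hd1, hnegκ₁]
    have h2 : fderiv ℝ (pd2 (NN r)) x ((1 : ℝ), (0 : ℝ))
        = (-(fderiv ℝ κ₂ x (1, 0))) • pd2 r x + (-κ₂ x) • fderiv ℝ (pd1 r) x (0, 1) := by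
      rw [hev2.fderiv_eq, fderiv_smul_apply' hdκ₂.fun_neg hd2, hnegκ₂, hsymr]
    have hsymN : fderiv ℝ (pd2 (NN r)) x ((1 : ℝ), (0 : ℝ))
        = fderiv ℝ (pd1 (NN r)) x ((0 : ℝ), (1 : ℝ)) := pd_symm hNN
    rw [← h1, ← h2, hsymN, h1]
  -- dot the identity with r_α and r_β
  have horth1 : dot3 (pd2 r x) (pd1 r x) = 0 := by rw [dot3_comm]; exact horth x hx
  have horth2 : dot3 (pd1 r x) (pd2 r x) = 0 := horth x hx
  have hMr1 := congrArg (fun w => dot3 w (pd1 r x)) hE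
  have hMr2 := congrArg (fun w => dot3 w (pd2 r x)) hE
  simp only [dot3_add_left, dot3_smul_left, horth1, horth2] at hMr1 hMr2
  -- Codazzi equations
  have hC1 : fderiv ℝ κ₁ x (0, 1) * A₁ r x ^ 2
      = (κ₂ x - κ₁ x) * dot3 (fderiv ℝ (pd1 r) x (0, 1)) (pd1 r x) := by
    rw [hsq1]; nlinarith [hMr1]
  have hC2 : fderiv ℝ κ₂ x (1, 0) * A₂ r x ^ 2
      = (κ₁ x - κ₂ x) * dot3 (fderiv ℝ (pd1 r) x (0, 1)) (pd2 r x) := by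
    rw [hsq2]; nlinarith [hMr2]
  have hk1β : fderiv ℝ κ₁ x (0, 1)
      = (κ₂ x - κ₁ x) * dot3 (fderiv ℝ (pd1 r) x (0, 1)) (pd1 r x) / A₁ r x ^ 2 := by
    rw [eq_div_iff (pow_ne_zero 2 ha)]; linarith [hC1]
  have hk2α : fderiv ℝ κ₂ x (1, 0)
      = (κ₁ x - κ₂ x) * dot3 (fderiv ℝ (pd1 r) x (0, 1)) (pd2 r x) / A₂ r x ^ 2 := by
    rw [eq_div_iff (pow_ne_zero 2 hb)]; linarith [hC2]
  -- derivatives of A₁ and A₂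
  have hdA1v : fderiv ℝ (A₁ r) x ((0 : ℝ), (1 : ℝ))
      = dot3 (fderiv ℝ (pd1 r) x (0, 1)) (pd1 r x) / A₁ r x := by
    have h : fderiv ℝ (A₁ r) x ((0 : ℝ), (1 : ℝ))
        = fderiv ℝ (fun y => Real.sqrt (dot3 (pd1 r y) (pd1 r y))) x (0, 1) := rfl
    rw [h, fderiv_sqrt_comp (diffAt_dot3 hd1 hd1) hS1pos, fderiv_dot3 hd1 hd1,
      dot3_comm (pd1 r x)]
    have h2 : Real.sqrt (dot3 (pd1 r x) (pd1 r x)) = A₁ r x := rfl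
    rw [h2]
    field_simp
    ring
  have hdA2v : fderiv ℝ (A₂ r) x ((1 : ℝ), (0 : ℝ))
      = dot3 (fderiv ℝ (pd1 r) x (0, 1)) (pd2 r x) / A₂ r x := by
    have h : fderiv ℝ (A₂ r) x ((1 : ℝ), (0 : ℝ))
        = fderiv ℝ (fun y => Real.sqrt (dot3 (pd2 r y) (pd2 r y))) x (1, 0) := rfl
    rw [h, fderiv_sqrt_comp (diffAt_dot3 hd2 hd2) hS2pos, fderiv_dot3 hd2 hd2,
      dot3_comm (pd2 r x), hsymr]
    have h2 : Real.sqrt (dot3 (pd2 r x) (pd2 r x)) = A₂ r x := rfl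
    rw [h2]
    field_simp
    ring
  -- product rules for the divergence numerator
  have hP1 : fderiv ℝ (fun y => κ₂ y * v₁ y * A₂ r y) x ((1 : ℝ), (0 : ℝ))
      = (fderiv ℝ κ₂ x (1, 0) * v₁ x + κ₂ x * fderiv ℝ v₁ x (1, 0)) * A₂ r x
        + κ₂ x * v₁ x * fderiv ℝ (A₂ r) x (1, 0) := by
    rw [fderiv_mul_apply' (f := fun y => κ₂ y * v₁ y) (g := fun y => A₂ r y)
        (hdκ₂.mul hdv₁) hdA2, fderiv_mul_apply' hdκ₂ hdv₁]
  have hP2 : fderiv ℝ (fun y => κ₁ y * v₂ y * A₁ r y) x ((0 : ℝ), (1 : ℝ))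
      = (fderiv ℝ κ₁ x (0, 1) * v₂ x + κ₁ x * fderiv ℝ v₂ x (0, 1)) * A₁ r x
        + κ₁ x * v₂ x * fderiv ℝ (A₁ r) x (0, 1) := by
    rw [fderiv_mul_apply' (f := fun y => κ₁ y * v₂ y) (g := fun y => A₁ r y)
        (hdκ₁.mul hdv₂) hdA1, fderiv_mul_apply' hdκ₁ hdv₂]
  -- final computation
  simp only [sdiv, eps1, eps2, pp, qq, Ho, Ko, pd1, pd2]
  rw [hP1, hP2, hdA1v, hdA2v, hk1β, hk2α]
  field_simp
  ring
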